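/- Let G be a finite non-nilpotent group with nil(G) = 1 such that |nil_G(x)| = |nil_G(y)| for all nontrivial x, y ∈ G. Then every element of G has prime power order. -/

import Mathlib

def nilizer {G : Type*} [Group G] (x : G) : Set G :=
  {g | Group.IsNilpotent (Subgroup.closure ({x, g} : Set G))}

def nilSet (G : Type*) [Group G] : Set G :=
  {x | ∀ y : G, Group.IsNilpotent (Subgroup.closure ({x, y} : Set G))}

/-!
Since `nilizer x ⊆ nilizer (x ^ k)` and all nilizers of nontrivial elements have the same size,
every nontrivial power of `x` has the nilizer of `x`; so do commuting nontrivial `a`, `b` of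
coprime orders, both being powers of `a * b`. Suppose the order of `x` has two prime divisors
`p ≠ q`, and let `u`, `v` be powers of `x` of orders `p`, `q`; they share the nilizer `N`.
A nontrivial `g ∈ N` has a power `g'` of prime order `r`, and whichever of `u`, `v` has order
prime to `r` commutes with `g'` (a finite nilpotent group is the product of its Sylow subgroups),
so `nilizer g = N` and `N` is a subgroup.

Every prime `r ∣ |G|` divides the common size `M` of the nilizers. Otherwise, for `h` of order
`r`, the same argument shows that the centralizer `C` of `h` is an `r`-group (an element of `C`
of prime order `s ≠ r` would make `nilizer h` a subgroup containing `h`); counting fixed points of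
conjugation by `h` on `nilizer h` gives `M ≡ |C| ≡ 0 [MOD r]`. Hence `N` contains an element of
every prime order `r ∣ |G|`, and with it a Sylow `r`-subgroup, so `N = G` and
`u ∈ nilSet G = {1}`.
-/

open Subgroup

section General

variable {G : Type*} [Group G]

lemma isNilpotent_of_le {H K : Subgroup G} (hle : H ≤ K) [Group.IsNilpotent K] :
    Group.IsNilpotent H :=
  Group.nilpotent_of_mulEquiv (subgroupOfEquivOfLe hle)

lemma closure_pair_le {a b : G} {K : Subgroup G} (ha : a ∈ K) (hb : b ∈ K) :
    closure {a, b} ≤ K :=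
  (closure_le K).mpr (Set.pair_subset ha hb)

lemma mem_closure_pair_left (a b : G) : a ∈ closure {a, b} := subset_closure (by simp)

lemma mem_closure_pair_right (a b : G) : b ∈ closure {a, b} := subset_closure (by simp)

lemma ne_one_of_orderOf_eq_prime {g : G} {p : ℕ} (hp : p.Prime) (hg : orderOf g = p) : g ≠ 1 :=
  fun h => hp.ne_one (by rw [← hg, h, orderOf_one])

lemma Commute.exists_mul_pow_eq_left {a b : G} (h : Commute a b)
    (hco : (orderOf a).Coprime (orderOf b)) : ∃ n : ℕ, (a * b) ^ n = a := by
  obtain ⟨n, hna, hnb⟩ := Nat.chineseRemainder hco 1 0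
  refine ⟨n, ?_⟩
  rw [h.mul_pow, (pow_eq_pow_iff_modEq.mpr hna : a ^ n = a ^ 1),
    (pow_eq_pow_iff_modEq.mpr hnb : b ^ n = b ^ 0), pow_one, pow_zero, mul_one]

lemma commute_of_orderOf_eq_prime_pow [Finite G] [Group.IsNilpotent G] {p q m n : ℕ}
    [Fact p.Prime] [Fact q.Prime] (hpq : p ≠ q) {a b : G} (ha : orderOf a = p ^ m)
    (hb : orderOf b = q ^ n) : Commute a b := by
  obtain ⟨P, hP⟩ := (IsPGroup.of_card ((Nat.card_zpowers a).trans ha)).exists_le_sylow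
  obtain ⟨Q, hQ⟩ := (IsPGroup.of_card ((Nat.card_zpowers b).trans hb)).exists_le_sylow
  have hnormal := (Group.isNilpotent_of_finite_tfae (G := G)).out 0 3 |>.mp ‹_›
  exact commute_of_normal_of_disjoint _ _ (hnormal p ⟨Fact.out⟩ P) (hnormal q ⟨Fact.out⟩ Q)
    (IsPGroup.disjoint_of_ne p q hpq _ _ P.isPGroup' Q.isPGroup') a b
    (hP (mem_zpowers a)) (hQ (mem_zpowers b))

lemma mem_nilizer_comm {x g : G} : g ∈ nilizer x ↔ x ∈ nilizer g := by
  simp only [nilizer, Set.mem_ofPred_eq]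
  rw [Set.pair_comm]

lemma mem_nilizer_of_closure_le {x g y k : G} (hg : g ∈ nilizer x)
    (hle : closure {y, k} ≤ closure {x, g}) : k ∈ nilizer y :=
  have : Group.IsNilpotent (closure {x, g}) := hg
  isNilpotent_of_le hle

lemma subset_nilizer_of_mem {K : Subgroup G} [Group.IsNilpotent K] {w : G} (hw : w ∈ K) :
    (K : Set G) ⊆ nilizer w := fun _ hk =>
  isNilpotent_of_le (closure_pair_le hw hk)

lemma mem_nilizer_of_commute {x g : G} (h : Commute x g) : g ∈ nilizer x := by
  have : IsMulCommutative (closure {x, g}) := isMulCommutative_closure <| by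
    rintro a (rfl | rfl) b (rfl | rfl)
    exacts [rfl, h.eq, h.eq.symm, rfl]
  open IsMulCommutative in exact CommGroup.isNilpotent

lemma nilizer_subset_nilizer_pow (x : G) (n : ℕ) : nilizer x ⊆ nilizer (x ^ n) := fun g hg =>
  mem_nilizer_of_closure_le hg <|
    closure_pair_le (pow_mem (mem_closure_pair_left x g) n) (mem_closure_pair_right x g)

lemma mul_mem_nilizer {a b : G} (hb : b ∈ nilizer a) : a * b ∈ nilizer a :=
  mem_nilizer_of_closure_le hb <| closure_pair_le (mem_closure_pair_left a b) <|
    mul_mem (mem_closure_pair_left a b) (mem_closure_pair_right a b)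

lemma map_mem_nilizer_iff {H : Type*} [Group H] {f : G →* H} (hf : Function.Injective f)
    {x g : G} : f g ∈ nilizer (f x) ↔ g ∈ nilizer x := by
  rw [nilizer, Set.mem_ofPred_eq, ← Set.image_pair, ← MonoidHom.map_closure]
  have e := equivMapOfInjective (closure {x, g}) f hf
  exact ⟨fun _ => Group.nilpotent_of_mulEquiv e.symm,
    fun h => Group.nilpotent_of_mulEquiv (_h := h) e⟩

lemma commute_of_mem_nilizer [Finite G] {p q m n : ℕ} [Fact p.Prime] [Fact q.Prime]
    (hpq : p ≠ q) {a b : G} (ha : orderOf a = p ^ m) (hb : orderOf b = q ^ n)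
    (hab : b ∈ nilizer a) : Commute a b := by
  have : Group.IsNilpotent (closure {a, b}) := hab
  have := commute_of_orderOf_eq_prime_pow hpq
    (a := (⟨a, mem_closure_pair_left a b⟩ : closure {a, b})) (b := ⟨b, mem_closure_pair_right a b⟩)
    (by rwa [orderOf_mk]) (by rwa [orderOf_mk])
  exact congrArg Subtype.val this

lemma ncard_nilizer_modEq_card_centralizer [Finite G] {r : ℕ} [Fact r.Prime] {h : G}
    (hh : orderOf h = r) :
    (nilizer h).ncard ≡ Nat.card (centralizer {h}) [MOD r] := by
  classical
  have := Fintype.ofFinite G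
  let φ : G →* Equiv.Perm G := (MulAut.toPerm G).comp MulAut.conj
  have hconj : ∀ g, φ h g ∈ nilizer h ↔ g ∈ nilizer h := fun g => by
    have := map_mem_nilizer_iff (f := (MulAut.conj h).toMonoidHom) (MulAut.conj h).injective
      (x := h) (g := g)
    rwa [show (MulAut.conj h).toMonoidHom h = h by simp] at this
  have hσ : (φ h).subtypePerm hconj ^ r ^ 1 = 1 := by
    ext g
    rw [pow_one, Equiv.Perm.subtypePerm_pow]
    show (φ h ^ r) g = g
    rw [← map_pow, ← hh, pow_orderOf_eq_one, map_one]
    rfl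
  have hfix : ((φ h).subtypePerm hconj).supportᶜ.card = Nat.card (centralizer {h}) := by
    rw [← Nat.card_eq_finsetCard]
    refine Nat.card_congr ((Equiv.subtypeEquivRight fun g => ?_).trans
      (Equiv.subtypeSubtypeEquivSubtype fun hg => mem_nilizer_of_commute
        (mem_centralizer_singleton_iff.mp hg).symm))
    rw [Finset.mem_compl, Equiv.Perm.mem_support, not_not, Subtype.ext_iff,
      mem_centralizer_singleton_iff, eq_comm (a := g.1 * h)]
    exact mul_inv_eq_iff_eq_mul
  rw [← hfix, ← Nat.card_coe_set_eq, Nat.card_eq_fintype_card]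
  exact (Equiv.Perm.card_compl_support_modEq hσ).symm

lemma exists_subgroup_coe_eq_nilizer {u : G}
    (hu : ∀ g ∈ nilizer u, g ≠ 1 → nilizer g = nilizer u) :
    ∃ N : Subgroup G, (N : Set G) = nilizer u := by
  refine ⟨{ carrier := nilizer u, one_mem' := ?one, mul_mem' := ?mul, inv_mem' := ?inv }, rfl⟩
  case one => exact mem_nilizer_of_commute (Commute.one_right u)
  case mul =>
    intro a b ha hb
    rcases eq_or_ne a 1 with rfl | ha1
    · rwa [one_mul]
    · rw [← hu a ha ha1] at hb ⊢
      exact mul_mem_nilizer hb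
  case inv =>
    intro a ha
    rcases eq_or_ne a 1 with rfl | ha1
    · rwa [inv_one]
    · rw [← hu a ha ha1]
      exact mem_nilizer_of_commute (Commute.refl a).inv_right

end General

def NilizersEquicard (G : Type*) [Group G] : Prop :=
  ∀ x y : G, x ≠ 1 → y ≠ 1 → (nilizer x).ncard = (nilizer y).ncard

namespace NilizersEquicard

variable {G : Type*} [Group G] [Finite G] (hG : NilizersEquicard G)
include hG

lemma nilizer_pow_eq {x : G} {n : ℕ} (hxn : x ^ n ≠ 1) : nilizer (x ^ n) = nilizer x := by
  have hx : x ≠ 1 := fun h => hxn (by rw [h, one_pow])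
  exact (Set.eq_of_subset_of_ncard_le (nilizer_subset_nilizer_pow x n)
    (hG _ _ hxn hx).le (Set.toFinite _)).symm

lemma nilizer_eq_of_commute {a b : G} (hab : Commute a b)
    (hco : (orderOf a).Coprime (orderOf b)) (ha : a ≠ 1) (hb : b ≠ 1) :
    nilizer a = nilizer b := by
  obtain ⟨m, hm⟩ := hab.exists_mul_pow_eq_left hco
  obtain ⟨n, hn⟩ := hab.symm.exists_mul_pow_eq_left hco.symm
  rw [← hab.eq] at hn
  have hma := hG.nilizer_pow_eq (hm ▸ ha)
  have hnb := hG.nilizer_pow_eq (hn ▸ hb)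
  rw [hm] at hma
  rw [hn] at hnb
  exact hma.trans hnb.symm

lemma nilizer_eq_of_mem_nilizer_of_prime_ne {p r : ℕ} [Fact p.Prime] [Fact r.Prime]
    (hrp : r ≠ p) {u g : G} (hu : orderOf u = p) (hg : g ∈ nilizer u) (hrg : r ∣ orderOf g) :
    nilizer g = nilizer u := by
  set g' := g ^ (orderOf g / r)
  have hg' : orderOf g' = r := orderOf_pow_orderOf_div (orderOf_pos g).ne' hrg
  have hg'1 : g' ≠ 1 := ne_one_of_orderOf_eq_prime Fact.out hg'
  have hu1 : u ≠ 1 := ne_one_of_orderOf_eq_prime Fact.out hu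
  have hgg' : nilizer g' = nilizer g := hG.nilizer_pow_eq hg'1
  have hg'u : g' ∈ nilizer u := mem_nilizer_comm.mpr (hgg' ▸ mem_nilizer_comm.mp hg)
  have hcomm : Commute u g' :=
    commute_of_mem_nilizer (m := 1) (n := 1) hrp.symm (by rw [hu, pow_one]) (by rw [hg', pow_one])
      hg'u
  have hco : (orderOf u).Coprime (orderOf g') := by
    rw [hu, hg']
    exact (Nat.coprime_primes Fact.out Fact.out).mpr hrp.symm
  rw [← hgg', hG.nilizer_eq_of_commute hcomm hco hu1 hg'1]

lemma nilizer_eq_of_mem_nilizer {p q : ℕ} [Fact p.Prime] [Fact q.Prime] (hpq : p ≠ q)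
    {u v : G} (hu : orderOf u = p) (hv : orderOf v = q) (huv : nilizer u = nilizer v)
    {g : G} (hg : g ∈ nilizer u) (hg1 : g ≠ 1) : nilizer g = nilizer u := by
  obtain ⟨r, hr, hrg⟩ := Nat.exists_prime_and_dvd (mt orderOf_eq_one_iff.mp hg1)
  have := Fact.mk hr
  rcases eq_or_ne r p with rfl | hrp
  · rw [huv]
    exact hG.nilizer_eq_of_mem_nilizer_of_prime_ne hpq hv (huv ▸ hg) hrg
  · exact hG.nilizer_eq_of_mem_nilizer_of_prime_ne hrp hu hg hrg

lemma isPGroup_centralizer {r : ℕ} [Fact r.Prime] {h : G} (hh : orderOf h = r)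
    (hr : ¬ r ∣ (nilizer h).ncard) : IsPGroup r (centralizer {h}) := by
  have h1 : h ≠ 1 := ne_one_of_orderOf_eq_prime Fact.out hh
  rw [IsPGroup.iff_orderOf]
  rintro ⟨t, ht⟩
  rw [orderOf_mk]
  refine ⟨_, Nat.eq_prime_pow_of_unique_prime_dvd (orderOf_pos t).ne' fun {s} hs hst => ?_⟩
  by_contra hsr
  have := Fact.mk hs
  set t' := t ^ (orderOf t / s)
  have ht' : orderOf t' = s := orderOf_pow_orderOf_div (orderOf_pos t).ne' hst
  have ht'1 : t' ≠ 1 := ne_one_of_orderOf_eq_prime hs ht'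
  have hcomm : Commute h t' := Commute.pow_right (mem_centralizer_singleton_iff.mp ht).symm _
  have hco : (orderOf h).Coprime (orderOf t') := by
    rw [hh, ht']
    exact (Nat.coprime_primes Fact.out hs).mpr (Ne.symm hsr)
  have hht' := hG.nilizer_eq_of_commute hcomm hco h1 ht'1
  obtain ⟨N, hN⟩ := exists_subgroup_coe_eq_nilizer fun g hg hg1 =>
    hG.nilizer_eq_of_mem_nilizer (Ne.symm hsr) hh ht' hht' hg hg1
  have hhN : h ∈ N := by
    rw [← SetLike.mem_coe, hN]
    exact mem_nilizer_of_commute (Commute.refl h)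
  apply hr
  rw [← hN, ← hh, ← Nat.card_coe_set_eq]
  exact orderOf_dvd_natCard N hhN

lemma prime_dvd_ncard_nilizer {x : G} (hx : x ≠ 1) {r : ℕ} [Fact r.Prime]
    (hrG : r ∣ Nat.card G) : r ∣ (nilizer x).ncard := by
  obtain ⟨h, hh⟩ := exists_prime_orderOf_dvd_card' r hrG
  have h1 : h ≠ 1 := ne_one_of_orderOf_eq_prime Fact.out hh
  rw [← hG h x h1 hx]
  by_contra hr
  have hC := hG.isPGroup_centralizer hh hr
  have : Nontrivial (centralizer {h}) :=
    ⟨⟨h, mem_centralizer_singleton_iff.mpr rfl⟩, 1, fun e => h1 (congrArg Subtype.val e)⟩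
  obtain ⟨k, hk, hcard⟩ := hC.nontrivial_iff_card.mp this
  exact hr <| (Nat.modEq_zero_iff_dvd.mp <| (ncard_nilizer_modEq_card_centralizer hh).trans <|
    Nat.modEq_zero_iff_dvd.mpr (hcard ▸ dvd_pow_self r hk.ne'))

lemma nilizer_eq_univ {p q : ℕ} [Fact p.Prime] [Fact q.Prime] (hpq : p ≠ q) {u v : G}
    (hu : orderOf u = p) (hv : orderOf v = q) (huv : nilizer u = nilizer v) :
    nilizer u = Set.univ := by
  have hclosed := fun g hg hg1 => hG.nilizer_eq_of_mem_nilizer hpq hu hv huv (g := g) hg hg1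
  obtain ⟨N, hNu⟩ := exists_subgroup_coe_eq_nilizer hclosed
  suffices N = ⊤ by rw [← hNu, this, coe_top]
  rw [← index_eq_one, Nat.eq_one_iff_not_exists_prime_dvd]
  intro r hr hrN
  have := Fact.mk hr
  have hrN' : r ∣ Nat.card N := by
    rw [← SetLike.coe_sort_coe, Nat.card_coe_set_eq, hNu]
    exact hG.prime_dvd_ncard_nilizer (ne_one_of_orderOf_eq_prime Fact.out hu)
      (hrN.trans N.index_dvd_card)
  obtain ⟨w, hw⟩ := exists_prime_orderOf_dvd_card' r hrN'
  rw [← orderOf_coe, ← pow_one r] at hw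
  obtain ⟨R, hR⟩ := (IsPGroup.of_card ((Nat.card_zpowers (w : G)).trans hw)).exists_le_sylow
  have hRN : R ≤ N := by
    have : Group.IsNilpotent R := R.isPGroup'.isNilpotent
    have hw1 : (w : G) ≠ 1 := ne_one_of_orderOf_eq_prime hr (by rwa [pow_one] at hw)
    intro t ht
    rw [← SetLike.mem_coe, hNu, ← hclosed w (hNu ▸ w.2) hw1]
    exact subset_nilizer_of_mem (hR (mem_zpowers _)) ht
  exact R.not_dvd_index (hrN.trans (index_dvd_of_le hRN))

end NilizersEquicard

lemma Nat.exists_ne_primes_dvd_of_not_prime_pow {n : ℕ} (hn : n ≠ 0)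
    (h : ¬ ∃ p k : ℕ, p.Prime ∧ n = p ^ k) :
    ∃ p q : ℕ, p.Prime ∧ q.Prime ∧ p ≠ q ∧ p ∣ n ∧ q ∣ n := by
  obtain ⟨p, hp, hpn⟩ := Nat.exists_prime_and_dvd fun h1 => h ⟨2, 0, Nat.prime_two, h1⟩
  by_contra! hq
  exact h ⟨p, _, hp, Nat.eq_prime_pow_of_unique_prime_dvd hn fun hr hrn =>
    by_contra fun hrp => hq _ _ hr hp hrp hrn hpn⟩

theorem stmt15_general {G : Type*} [Group G] [Finite G]
    (hnil : nilSet G = {1})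
    (hreg : ∀ x y : G, x ≠ 1 → y ≠ 1 → (nilizer x).ncard = (nilizer y).ncard) :
    ∀ x : G, ∃ (p n : ℕ), p.Prime ∧ orderOf x = p ^ n := by
  have hG : NilizersEquicard G := hreg
  intro x
  by_contra hx
  obtain ⟨p, q, hp, hq, hpq, hpx, hqx⟩ :=
    Nat.exists_ne_primes_dvd_of_not_prime_pow (orderOf_pos x).ne' hx
  have := Fact.mk hp
  have := Fact.mk hq
  have hu := orderOf_pow_orderOf_div (orderOf_pos x).ne' hpx
  have hv := orderOf_pow_orderOf_div (orderOf_pos x).ne' hqx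
  have hu1 := ne_one_of_orderOf_eq_prime hp hu
  have huv := (hG.nilizer_pow_eq hu1).trans
    (hG.nilizer_pow_eq (ne_one_of_orderOf_eq_prime hq hv)).symm
  have hmem : x ^ (orderOf x / p) ∈ nilSet G :=
    Set.eq_univ_iff_forall.mp (hG.nilizer_eq_univ hpq hu hv huv)
  rw [hnil] at hmem
  exact hu1 hmem

theorem stmt15 {G : Type*} [Group G] [Finite G]
    (hnn : ¬ Group.IsNilpotent G) (hnil : nilSet G = {1})
    (hreg : ∀ x y : G, x ≠ 1 → y ≠ 1 → (nilizer x).ncard = (nilizer y).ncard) :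
    ∀ x : G, ∃ (p n : ℕ), p.Prime ∧ orderOf x = p ^ n :=
  stmt15_general hnil hreg
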